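/- arXiv:2305.02035 — 2 statements merged into one kernel-verified Lean document; each statement's English description precedes it below -/
import Mathlib

section
/- Let X be a smooth projective curve of genus g ≥ 3 over an algebraically closed field of characteristic 0, and suppose T(X,K_X,x) is nonempty for some x < (g-1)/2. Then T(X,K_X,x+1) is nonempty; moreover dim T(X,K_X,x+1) ≥ 1 + dim T(X,K_X,x). -/
/-- Let `X` be a smooth projective curve of genus `g ≥ 3` over an
algebraically closed field of characteristic 0 (so `X` has infinitely many points), with
canonical divisor `K`, `h0` the dimension of sections (satisfying Riemann–Roch and monotone
under adding points), and `dim` a dimension function on loci of finite subsets of `X`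
(if every member of a locus `A` can be enlarged by infinitely many points `p` to members of
`B`, then `dim B ≥ dim A + 1`).  Suppose `x < (g-1)/2` and the Terracini locus
`T(X, K_X, x) = {S : #S = x ∧ h⁰(K - 2S) > max{0, g - 2x}}` is nonempty.  Then
`T(X, K_X, x+1)` is nonempty, and `dim T(X, K_X, x+1) ≥ 1 + dim T(X, K_X, x)`. -/
theorem terracini_canonical_step_up
    {X : Type*} [Infinite X] [DecidableEq X] (g x : ℕ) (hg : 3 ≤ g)
    (h0 : (X →₀ ℤ) → ℕ) (K : X →₀ ℤ)
    (riemannRoch : ∀ D : X →₀ ℤ,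
      (h0 D : ℤ) = (D.sum fun _ n => n) + 1 - (g : ℤ) + (h0 (K - D) : ℤ))
    (heff : ∀ (D : X →₀ ℤ) (p : X), h0 D ≤ h0 (D + Finsupp.single p 1))
    (dim : Set (Finset X) → WithTop ℕ)
    (hdim : ∀ A B : Set (Finset X), A.Nonempty →
      (∀ S ∈ A, {p : X | p ∉ S ∧ insert p S ∈ B}.Infinite) → dim A + 1 ≤ dim B)
    (hx : 2 * x + 1 < g)
    (hne : {S : Finset X | S.card = x ∧
      max 0 ((g : ℤ) - 2 * (x : ℤ))
        < (h0 (K - ∑ p ∈ S, Finsupp.single p (2 : ℤ)) : ℤ)}.Nonempty) :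
    {S : Finset X | S.card = x + 1 ∧
      max 0 ((g : ℤ) - 2 * ((x : ℤ) + 1))
        < (h0 (K - ∑ p ∈ S, Finsupp.single p (2 : ℤ)) : ℤ)}.Nonempty ∧
    dim {S : Finset X | S.card = x ∧
      max 0 ((g : ℤ) - 2 * (x : ℤ))
        < (h0 (K - ∑ p ∈ S, Finsupp.single p (2 : ℤ)) : ℤ)} + 1 ≤
    dim {S : Finset X | S.card = x + 1 ∧
      max 0 ((g : ℤ) - 2 * ((x : ℤ) + 1))
        < (h0 (K - ∑ p ∈ S, Finsupp.single p (2 : ℤ)) : ℤ)} := by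
  -- degree of the double divisor
  have hdeg : ∀ S : Finset X,
      ((∑ p ∈ S, Finsupp.single p (2 : ℤ)).sum fun _ n => n) = 2 * S.card := by
    intro S
    classical
    induction S using Finset.induction_on with
    | empty => simp
    | insert _ _ hpS ih =>
        rename_i a s
        rw [Finset.sum_insert hpS, Finsupp.sum_add_index (by simp) (by intros; rfl),
          Finsupp.sum_single_index rfl, ih]
        push_cast [Finset.card_insert_of_notMem hpS]
        ring
  -- the key step: any extension by a new point stays in the Terracini locus
  have key : ∀ S : Finset X, S.card = x →
      max 0 ((g : ℤ) - 2 * (x : ℤ))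
        < (h0 (K - ∑ p ∈ S, Finsupp.single p (2 : ℤ)) : ℤ) →
      ∀ p : X, p ∉ S →
      (insert p S).card = x + 1 ∧
      max 0 ((g : ℤ) - 2 * ((x : ℤ) + 1))
        < (h0 (K - ∑ q ∈ insert p S, Finsupp.single q (2 : ℤ)) : ℤ) := by
    intro S hScard hSh p hpS
    refine ⟨by rw [Finset.card_insert_of_notMem hpS, hScard], ?_⟩
    set D : X →₀ ℤ := ∑ q ∈ S, Finsupp.single q (2 : ℤ) with hD
    have hsum : (∑ q ∈ insert p S, Finsupp.single q (2 : ℤ))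
        = D + Finsupp.single p 1 + Finsupp.single p 1 := by
      rw [Finset.sum_insert hpS]
      have : Finsupp.single p (2 : ℤ) = Finsupp.single p 1 + Finsupp.single p 1 := by
        rw [← Finsupp.single_add]; norm_num
      rw [this]; abel
    rw [hsum]
    set D' : X →₀ ℤ := D + Finsupp.single p 1 + Finsupp.single p 1 with hD'
    have hmono : (h0 D : ℤ) ≤ (h0 D' : ℤ) := by
      exact_mod_cast le_trans (heff D p) (heff (D + Finsupp.single p 1) p)
    have hdegD : (D.sum fun _ n => n) = 2 * x := by
      rw [hD, hdeg, hScard]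
    have hdegD' : (D'.sum fun _ n => n) = 2 * x + 2 := by
      have h := hdeg (insert p S)
      rw [hsum] at h
      rw [h, Finset.card_insert_of_notMem hpS, hScard]
      push_cast
      ring
    have rr1 := riemannRoch D
    have rr2 := riemannRoch D'
    rw [hdegD] at rr1
    rw [hdegD'] at rr2
    have hbig : (g : ℤ) - 2 * (x : ℤ) < (h0 (K - D) : ℤ) :=
      lt_of_le_of_lt (le_max_right _ _) hSh
    have hmax : max 0 ((g : ℤ) - 2 * ((x : ℤ) + 1)) = (g : ℤ) - 2 * ((x : ℤ) + 1) := by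
      apply max_eq_right
      have : (2 * x + 2 : ℤ) ≤ g := by exact_mod_cast hx
      linarith
    rw [hmax]
    -- from RR: h0(K - D') = h0 D' - (2x+2) - 1 + g ≥ h0 D - 2x - 3 + g = h0(K-D) - 2
    linarith
  constructor
  · obtain ⟨S, hScard, hSh⟩ := hne
    obtain ⟨p, hp⟩ := S.exists_notMem
    exact ⟨insert p S, key S hScard hSh p hp⟩
  · apply hdim _ _ hne
    rintro S ⟨hScard, hSh⟩
    apply Set.Infinite.mono (s := (↑S : Set X)ᶜ)
    · intro p hp
      exact ⟨hp, key S hScard hSh p hp⟩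
    · exact (Set.Finite.infinite_compl (S.finite_toSet))
end

section
/- Let X ⊂ P^r (r ≥ 3) be a nondegenerate irreducible curve and x an integer with 2x < r. If the Terracini locus T(X,x) with respect to hyperplane sections is nonempty, then T(X,x+1) is also nonempty. -/
/-! Tangency at one more point imposes at most two linear conditions (value and derivative), so
adding a point `p ∉ S` lowers the dimension of the space of hyperplanes tangent along `S` by at
most `2`. As that dimension exceeds `r + 1 - 2x ≥ 2`, the new space is still nonzero and of
dimension `> r + 1 - 2(x + 1)`. -/

open Module

theorem Submodule.finrank_le_finrank_inf_ker_add {K W M : Type*} [DivisionRing K]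
    [AddCommGroup W] [Module K W] [AddCommGroup M] [Module K M] [FiniteDimensional K M]
    (V : Submodule K W) (f : W →ₗ[K] M) :
    finrank K V ≤ finrank K ↥(V ⊓ LinearMap.ker f) + finrank K M := by
  by_cases hV : FiniteDimensional K V
  · have hker : finrank K ↥(LinearMap.ker (f.domRestrict V)) =
        finrank K ↥(V ⊓ LinearMap.ker f) := by
      rw [← Submodule.finrank_map_subtype_eq, LinearMap.ker_domRestrict,
        Submodule.map_comap_subtype]
    have hrank := (f.domRestrict V).finrank_range_add_finrank_ker
    have hrange := (LinearMap.range (f.domRestrict V)).finrank_le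
    omega
  · rw [finrank_of_infinite_dimensional hV]
    exact Nat.zero_le _

theorem finrank_biInf_ker_le_finrank_biInf_ker_insert_add {K W M ι : Type*} [DivisionRing K]
    [AddCommGroup W] [Module K W] [AddCommGroup M] [Module K M] [FiniteDimensional K M]
    [DecidableEq ι] (f : ι → W →ₗ[K] M) (S : Finset ι) (p : ι) :
    finrank K ↥(⨅ q ∈ S, LinearMap.ker (f q)) ≤
      finrank K ↥(⨅ q ∈ insert p S, LinearMap.ker (f q)) + finrank K M := by
  rw [Finset.iInf_insert, inf_comm]
  exact Submodule.finrank_le_finrank_inf_ker_add _ (f p)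

theorem terracini_hyperplanes_step_up_general
    {K W X : Type*} [Field K]
    [AddCommGroup W] [Module K W] [Infinite X]
    (r x : ℕ)
    (ev : X → (W →ₗ[K] (Fin 2 → K)))
    (hx : 2 * x < r)
    (hne : ∃ S : Finset X, S.card = x ∧
      (⨅ p ∈ S, LinearMap.ker (ev p)) ≠ ⊥ ∧
      r + 1 - 2 * x < Module.finrank K ↥(⨅ p ∈ S, LinearMap.ker (ev p))) :
    ∃ S : Finset X, S.card = x + 1 ∧
      (⨅ p ∈ S, LinearMap.ker (ev p)) ≠ ⊥ ∧
      r + 1 - 2 * (x + 1) < Module.finrank K ↥(⨅ p ∈ S, LinearMap.ker (ev p)) := by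
  classical
  obtain ⟨S, hcard, -, hdim⟩ := hne
  obtain ⟨p, hp⟩ := S.exists_notMem
  have hstep := finrank_biInf_ker_le_finrank_biInf_ker_insert_add ev S p
  rw [Module.finrank_fin_fun] at hstep
  refine ⟨insert p S, by rw [Finset.card_insert_of_notMem hp, hcard], ?_, by omega⟩
  intro hbot
  rw [hbot, finrank_bot] at hstep
  omega

/-- Let `X ⊂ ℙ^r` (`r ≥ 3`) be a nondegenerate irreducible curve over an
algebraically closed field of characteristic 0 (so `X` has infinitely many points).  Here `W`
(of dimension `r + 1`) is the space of hyperplane forms and `ev p : W → K²` records the value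
and derivative of a form along `X` at `p ∈ X_reg` (surjective since `X` is embedded and
smooth at `p`; nondegeneracy says no nonzero form vanishes identically on `X`).  A reduced
set `S` of `x` points belongs to the Terracini locus `T(X, x)` iff the space
`V_S = ⋂_{p ∈ S} ker (ev p)` of hyperplanes tangent to `X` along `S` is nonzero and has
projective dimension `> r - 2x`, i.e. `dim V_S > r + 1 - 2x`.  If `2x < r` and `T(X, x)` is
nonempty, then `T(X, x + 1)` is nonempty. -/
theorem terracini_hyperplanes_step_up
    {K W X : Type*} [Field K] [IsAlgClosed K] [CharZero K]
    [AddCommGroup W] [Module K W] [FiniteDimensional K W] [Infinite X]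
    (r x : ℕ) (hr : 3 ≤ r) (hW : Module.finrank K W = r + 1)
    (ev : X → (W →ₗ[K] (Fin 2 → K)))
    (hsmooth : ∀ p : X, Function.Surjective (ev p))
    (hnondeg : ∀ w : W, w ≠ 0 → ∃ p : X, ev p w 0 ≠ 0)
    (hx : 2 * x < r)
    (hne : ∃ S : Finset X, S.card = x ∧
      (⨅ p ∈ S, LinearMap.ker (ev p)) ≠ ⊥ ∧
      r + 1 - 2 * x < Module.finrank K ↥(⨅ p ∈ S, LinearMap.ker (ev p))) :
    ∃ S : Finset X, S.card = x + 1 ∧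
      (⨅ p ∈ S, LinearMap.ker (ev p)) ≠ ⊥ ∧
      r + 1 - 2 * (x + 1) < Module.finrank K ↥(⨅ p ∈ S, LinearMap.ker (ev p)) :=
  terracini_hyperplanes_step_up_general r x ev hx hne
end
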